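/- arXiv:2309.08117 — 6 statements merged into one kernel-verified Lean document; each statement's English description precedes it below -/
import Mathlib

section
/- Let N₀ ∈ ℝ³ be a unit vector, let w ∈ ℝ³ with w ≠ 0, and let ρ₀, ρ₁₂ > 0. Set ν₀ := √ρ₀ · N₀, assume ⟪w, ν₀⟫ ≠ 0, set α := ‖w‖² (ρ₁₂ − ρ₀) / ⟪w, ν₀⟫², and assume 1 + α ≥ 0. Define P : ℝ³ → ℝ³ by P x := (⟪w, x⟫ / ‖w‖²) · w. Then the vector N₁₂ := √(ρ₀/ρ₁₂) · ((1 + √(1 + α)) · P N₀ − N₀) is a unit vector. -/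
open scoped InnerProductSpace

noncomputable def cross3 (a b : EuclideanSpace ℝ (Fin 3)) : EuclideanSpace ℝ (Fin 3) :=
  (WithLp.equiv 2 (Fin 3 → ℝ)).symm
    (crossProduct ((WithLp.equiv 2 (Fin 3 → ℝ)) a) ((WithLp.equiv 2 (Fin 3 → ℝ)) b))

/-!
`P N₀` is the orthogonal projection of `N₀` onto `ℝ ∙ w`, so `⟪P N₀, N₀⟫ = ‖P N₀‖²` and for every
scalar `t` we get `‖t • P N₀ - N₀‖² = 1 + (t² - 2t) ‖P N₀‖²`. For `t = 1 + √(1 + α)` the coefficient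
`t² - 2t` is `α`, and `α ‖P N₀‖² = (ρ₁₂ - ρ₀) / ρ₀` by the choice of `α`; hence
`‖t • P N₀ - N₀‖² = ρ₁₂ / ρ₀`, which the prefactor `√(ρ₀ / ρ₁₂)` normalises to `1`.
-/

section

variable {E : Type*} [NormedAddCommGroup E] [InnerProductSpace ℝ E]

theorem Submodule.norm_smul_starProjection_sub_sq (K : Submodule ℝ E)
    [K.HasOrthogonalProjection] (t : ℝ) (x : E) :
    ‖t • K.starProjection x - x‖ ^ 2 = ‖x‖ ^ 2 + (t ^ 2 - 2 * t) * ‖K.starProjection x‖ ^ 2 := by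
  have hperp : ⟪K.starProjection x, x⟫_ℝ = ‖K.starProjection x‖ ^ 2 := by
    have := K.starProjection_inner_eq_zero x _ (K.starProjection_apply_mem x)
    rw [inner_sub_left, real_inner_self_eq_norm_sq, real_inner_comm] at this
    linarith
  rw [norm_sub_sq_real, norm_smul, real_inner_smul_left, hperp, mul_pow, Real.norm_eq_abs, sq_abs]
  ring

theorem norm_starProjection_span_singleton_sq (w x : E) :
    ‖(ℝ ∙ w).starProjection x‖ ^ 2 = ⟪w, x⟫_ℝ ^ 2 / ‖w‖ ^ 2 := by
  rw [Submodule.starProjection_singleton, RCLike.ofReal_real_eq_id, id, norm_smul, mul_pow,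
    Real.norm_eq_abs, sq_abs]
  rcases eq_or_ne w 0 with rfl | hw
  · simp
  · field_simp [norm_ne_zero_iff.mpr hw]

theorem norm_sqrt_div_smul_eq_one {a b : ℝ} (ha : a ≠ 0) (hb : b ≠ 0) {v : E}
    (hv : ‖v‖ ^ 2 = b / a) : ‖Real.sqrt (a / b) • v‖ = 1 := by
  have hba : 0 ≤ b / a := hv ▸ sq_nonneg _
  rw [norm_smul, Real.norm_of_nonneg (Real.sqrt_nonneg _), ← Real.sqrt_sq (norm_nonneg v), hv,
    ← Real.sqrt_mul' _ hba, div_mul_div_comm, mul_comm a b,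
    div_self (mul_ne_zero hb ha), Real.sqrt_one]

end

theorem new_normal_is_unit (N₀ : EuclideanSpace ℝ (Fin 3)) (hN₀ : ‖N₀‖ = 1)
    (w : EuclideanSpace ℝ (Fin 3)) (hw : w ≠ 0)
    (ρ₀ ρ₁₂ : ℝ) (hρ₀ : 0 < ρ₀) (hρ₁₂ : 0 < ρ₁₂)
    (ν₀ : EuclideanSpace ℝ (Fin 3)) (hν₀ : ν₀ = Real.sqrt ρ₀ • N₀)
    (hinner : ⟪w, ν₀⟫_ℝ ≠ 0)
    (α : ℝ) (hα : α = ‖w‖ ^ 2 * (ρ₁₂ - ρ₀) / ⟪w, ν₀⟫_ℝ ^ 2)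
    (hpos : 1 + α ≥ 0)
    (P : EuclideanSpace ℝ (Fin 3) → EuclideanSpace ℝ (Fin 3))
    (hP : ∀ x, P x = (⟪w, x⟫_ℝ / ‖w‖ ^ 2) • w) :
    ‖Real.sqrt (ρ₀ / ρ₁₂) • ((1 + Real.sqrt (1 + α)) • P N₀ - N₀)‖ = 1 := by
  have hP' : P N₀ = (ℝ ∙ w).starProjection N₀ := by
    rw [hP, Submodule.starProjection_singleton]; rfl
  have hscale : (1 + Real.sqrt (1 + α)) ^ 2 - 2 * (1 + Real.sqrt (1 + α)) = α := by
    linear_combination Real.sq_sqrt hpos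
  have hwν : ⟪w, ν₀⟫_ℝ = Real.sqrt ρ₀ * ⟪w, N₀⟫_ℝ := by rw [hν₀, real_inner_smul_right]
  have hwN₀ : ⟪w, N₀⟫_ℝ ≠ 0 := right_ne_zero_of_mul (hwν ▸ hinner)
  have hαρ : α * (⟪w, N₀⟫_ℝ ^ 2 / ‖w‖ ^ 2) = (ρ₁₂ - ρ₀) / ρ₀ := by
    rw [hα, hwν, mul_pow, Real.sq_sqrt hρ₀.le]
    field_simp [norm_ne_zero_iff.mpr hw]
  refine norm_sqrt_div_smul_eq_one hρ₀.ne' hρ₁₂.ne' ?_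
  rw [hP', Submodule.norm_smul_starProjection_sub_sq, hscale, norm_starProjection_span_singleton_sq,
    hαρ, hN₀]
  field_simp
  ring
end

section
/- Let ν₀, ν₁, ν₂ ∈ ℝ³, set w := ν₁ + ν₂, assume ⟪w, ν₀⟫ ≠ 0, let ρ₁₂ ∈ ℝ, set α := ‖w‖² (ρ₁₂ − ‖ν₀‖²) / ⟪w, ν₀⟫², assume 1 + α ≥ 0, and define C := (1 + √(1 + α)) ⟪w, ν₀⟫ / ‖w‖² and ν₁₂ := C·w − ν₀. Then: (i) the discrete compatibility condition (ν₁₂ + ν₀) × (ν₁ + ν₂) = 0 holds; (ii) ‖ν₁₂‖² = ρ₁₂; and (iii) for any r₀ ∈ ℝ³, setting r₁ := r₀ + ν₁ × ν₀ and r₂ := r₀ − ν₂ × ν₀, the two update formulas for the fourth vertex agree: r₁ − ν₁₂ × ν₁ = r₂ + ν₁₂ × ν₂. -/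
/-! The vector ν₁₂ + ν₀ = C • w is parallel to w = ν₁ + ν₂, which is the compatibility condition,
and the two candidates for r₁₂ differ by ±(ν₁₂ + ν₀) × (ν₁ + ν₂). The constant C is the
larger root of the quadratic ‖C • w - ν₀‖² = ρ₁₂ in C. -/

open scoped InnerProductSpace

section cross3

variable (u v w : EuclideanSpace ℝ (Fin 3)) (c : ℝ)

lemma cross3_eq : cross3 u v = WithLp.toLp 2 (crossProduct u.ofLp v.ofLp) := rfl

lemma cross3_add_left : cross3 (u + v) w = cross3 u w + cross3 v w := by
  simp [cross3_eq]

lemma cross3_add_right : cross3 u (v + w) = cross3 u v + cross3 u w := by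
  simp [cross3_eq]

lemma cross3_smul_left : cross3 (c • u) v = c • cross3 u v := by
  simp [cross3_eq]

lemma cross3_self : cross3 u u = 0 := by
  simp [cross3_eq]

lemma neg_cross3 : -cross3 u v = cross3 v u := by
  rw [cross3_eq, cross3_eq, ← WithLp.toLp_neg, cross_anticomm]

end cross3

lemma norm_smul_sub_sq_real {E : Type*} [NormedAddCommGroup E] [InnerProductSpace ℝ E]
    (c : ℝ) (w v : E) : ‖c • w - v‖ ^ 2 = c ^ 2 * ‖w‖ ^ 2 - 2 * c * ⟪w, v⟫_ℝ + ‖v‖ ^ 2 := by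
  rw [norm_sub_sq_real, norm_smul, real_inner_smul_left, mul_pow, Real.norm_eq_abs, sq_abs]
  ring

lemma quadratic_root_formula {n a m ρ s : ℝ} (hn : n ≠ 0) (ha : a ≠ 0)
    (hs : s ^ 2 = 1 + n * (ρ - m) / a ^ 2) :
    ((1 + s) * a / n) ^ 2 * n - 2 * ((1 + s) * a / n) * a + m = ρ := by
  field_simp at hs ⊢
  linear_combination hs

lemma lelieuvre_fourth_vertex_eq_of_compat {ν₀ ν₁ ν₂ ν₁₂ : EuclideanSpace ℝ (Fin 3)}
    (h : cross3 (ν₁₂ + ν₀) (ν₁ + ν₂) = 0) (r₀ : EuclideanSpace ℝ (Fin 3)) :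
    (r₀ + cross3 ν₁ ν₀) - cross3 ν₁₂ ν₁ = (r₀ - cross3 ν₂ ν₀) + cross3 ν₁₂ ν₂ := by
  rw [cross3_add_left, cross3_add_right, cross3_add_right] at h
  rw [← neg_cross3 ν₀ ν₁, ← neg_cross3 ν₀ ν₂]
  linear_combination (norm := module) -h

theorem lelieuvre_update_consistency (ν₀ ν₁ ν₂ : EuclideanSpace ℝ (Fin 3))
    (w : EuclideanSpace ℝ (Fin 3)) (hw : w = ν₁ + ν₂)
    (hinner : ⟪w, ν₀⟫_ℝ ≠ 0) (ρ₁₂ : ℝ)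
    (α : ℝ) (hα : α = ‖w‖ ^ 2 * (ρ₁₂ - ‖ν₀‖ ^ 2) / ⟪w, ν₀⟫_ℝ ^ 2)
    (hpos : 1 + α ≥ 0)
    (C : ℝ) (hC : C = (1 + Real.sqrt (1 + α)) * ⟪w, ν₀⟫_ℝ / ‖w‖ ^ 2)
    (ν₁₂ : EuclideanSpace ℝ (Fin 3)) (hν₁₂ : ν₁₂ = C • w - ν₀) :
    cross3 (ν₁₂ + ν₀) (ν₁ + ν₂) = 0 ∧
    ‖ν₁₂‖ ^ 2 = ρ₁₂ ∧
    ∀ r₀ : EuclideanSpace ℝ (Fin 3),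
      (r₀ + cross3 ν₁ ν₀) - cross3 ν₁₂ ν₁ = (r₀ - cross3 ν₂ ν₀) + cross3 ν₁₂ ν₂ := by
  have hcompat : cross3 (ν₁₂ + ν₀) (ν₁ + ν₂) = 0 := by
    rw [hν₁₂, sub_add_cancel, ← hw, cross3_smul_left, cross3_self, smul_zero]
  refine ⟨hcompat, ?_, lelieuvre_fourth_vertex_eq_of_compat hcompat⟩
  have hw0 : w ≠ 0 := fun h => hinner (by rw [h, inner_zero_left])
  rw [hν₁₂, norm_smul_sub_sq_real, hC]
  exact quadratic_root_formula (by positivity) hinner (hα ▸ Real.sq_sqrt hpos)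
end

section
/- Let N₀, N₁, N₂ ∈ ℝ³ be unit vectors, set w := N₁ + N₂, and assume w ≠ 0 and ⟪w, N₀⟫ ≠ 0. Then a unit vector N₁₂ ∈ ℝ³ satisfies the discrete compatibility condition (N₁₂ + N₀) × (N₁ + N₂) = 0 if and only if N₁₂ = −N₀ or N₁₂ = (2 ⟪w, N₀⟫ / ‖w‖²) · w − N₀. In particular, the second solution is the Householder reflection (2P − I) N₀ of N₀, where P x := (⟪w, x⟫ / ‖w‖²) · w, and it is a unit vector. -/
/-!
The compatibility condition says that `N₁₂ + N₀` is parallel to `w`, i.e. `N₁₂ = t • w - N₀`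
for some real `t`. On this line `‖t • w - N₀‖² - ‖N₀‖² = t (t ‖w‖² - 2 ⟪w, N₀⟫)`, so the points
of norm `‖N₀‖ = 1` are exactly `t = 0`, giving `-N₀`, and `t = 2 ⟪w, N₀⟫ / ‖w‖²`, giving the
reflection of `N₀` in the line `ℝ w`.
-/

open scoped InnerProductSpace

theorem crossProduct_eq_zero_iff_exists_smul {F : Type*} [Field F] {v w : Fin 3 → F}
    (hw : w ≠ 0) : crossProduct v w = 0 ↔ ∃ t : F, v = t • w := by
  rw [← cross_anticomm, neg_eq_zero, ← not_iff_not, ← Ne,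
    crossProduct_ne_zero_iff_linearIndependent, LinearIndependent.pair_iff' hw]
  simp [eq_comm]

theorem cross3_eq_zero_iff_exists_smul {a b : EuclideanSpace ℝ (Fin 3)} (hb : b ≠ 0) :
    cross3 a b = 0 ↔ ∃ t : ℝ, a = t • b := by
  have hb' : b.ofLp ≠ 0 := by simpa using hb
  simp only [cross3, WithLp.equiv_apply, WithLp.equiv_symm_apply, WithLp.toLp_eq_zero,
    crossProduct_eq_zero_iff_exists_smul hb', ← WithLp.ofLp_smul]
  exact exists_congr fun t ↦ (WithLp.ofLp_injective 2).eq_iff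

section InnerProductSpace

variable {E : Type*} [NormedAddCommGroup E] [InnerProductSpace ℝ E]

theorem norm_smul_sub_sq_sub_norm_sq (t : ℝ) (v w : E) :
    ‖t • w - v‖ ^ 2 - ‖v‖ ^ 2 = t * (t * ‖w‖ ^ 2 - 2 * ⟪w, v⟫_ℝ) := by
  rw [norm_sub_sq_real, real_inner_smul_left, norm_smul, Real.norm_eq_abs, mul_pow, sq_abs]
  ring

theorem norm_smul_sub_eq_norm_iff {v w : E} (hw : w ≠ 0) (t : ℝ) :
    ‖t • w - v‖ = ‖v‖ ↔ t = 0 ∨ t = 2 * ⟪w, v⟫_ℝ / ‖w‖ ^ 2 := by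
  have hw2 : ‖w‖ ^ 2 ≠ 0 := by positivity
  rw [← sq_eq_sq₀ (norm_nonneg _) (norm_nonneg _), ← sub_eq_zero,
    norm_smul_sub_sq_sub_norm_sq, mul_eq_zero, sub_eq_zero, eq_div_iff hw2]

theorem exists_smul_sub_and_norm_eq_iff {u v w : E} (hw : w ≠ 0) :
    ((∃ t : ℝ, u = t • w - v) ∧ ‖u‖ = ‖v‖) ↔ u = -v ∨ u = (2 * ⟪w, v⟫_ℝ / ‖w‖ ^ 2) • w - v := by
  constructor
  · rintro ⟨⟨t, rfl⟩, hnorm⟩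
    rcases (norm_smul_sub_eq_norm_iff hw t).1 hnorm with rfl | rfl
    · simp
    · exact Or.inr rfl
  · rintro (rfl | rfl)
    · exact ⟨⟨0, by simp⟩, norm_neg v⟩
    · exact ⟨⟨_, rfl⟩, (norm_smul_sub_eq_norm_iff hw _).2 (Or.inr rfl)⟩

end InnerProductSpace

theorem constant_curvature_normal_update_general (N₀ N₁ N₂ : EuclideanSpace ℝ (Fin 3))
    (h₀ : ‖N₀‖ = 1)
    (w : EuclideanSpace ℝ (Fin 3)) (hw : w = N₁ + N₂)
    (hw0 : w ≠ 0) :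
    (∀ N₁₂ : EuclideanSpace ℝ (Fin 3), ‖N₁₂‖ = 1 →
      (cross3 (N₁₂ + N₀) (N₁ + N₂) = 0 ↔
        N₁₂ = -N₀ ∨ N₁₂ = (2 * ⟪w, N₀⟫_ℝ / ‖w‖ ^ 2) • w - N₀)) ∧
    ‖(2 * ⟪w, N₀⟫_ℝ / ‖w‖ ^ 2) • w - N₀‖ = 1 := by
  refine ⟨fun N₁₂ hN₁₂ ↦ ?_, h₀ ▸ (norm_smul_sub_eq_norm_iff hw0 _).2 (Or.inr rfl)⟩
  rw [← hw, cross3_eq_zero_iff_exists_smul hw0, ← exists_smul_sub_and_norm_eq_iff hw0, hN₁₂, h₀]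
  simp only [eq_sub_iff_add_eq, and_true]

theorem constant_curvature_normal_update (N₀ N₁ N₂ : EuclideanSpace ℝ (Fin 3))
    (h₀ : ‖N₀‖ = 1) (h₁ : ‖N₁‖ = 1) (h₂ : ‖N₂‖ = 1)
    (w : EuclideanSpace ℝ (Fin 3)) (hw : w = N₁ + N₂)
    (hw0 : w ≠ 0) (hinner : ⟪w, N₀⟫_ℝ ≠ 0) :
    (∀ N₁₂ : EuclideanSpace ℝ (Fin 3), ‖N₁₂‖ = 1 →
      (cross3 (N₁₂ + N₀) (N₁ + N₂) = 0 ↔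
        N₁₂ = -N₀ ∨ N₁₂ = (2 * ⟪w, N₀⟫_ℝ / ‖w‖ ^ 2) • w - N₀)) ∧
    ‖(2 * ⟪w, N₀⟫_ℝ / ‖w‖ ^ 2) • w - N₀‖ = 1 :=
  constant_curvature_normal_update_general N₀ N₁ N₂ h₀ w hw hw0
end

section
/- Let r, N : ℝ² → ℝ³ be twice continuously differentiable and a, b : ℝ² → ℝ be continuously differentiable, and suppose that on all of ℝ² the first partial derivatives satisfy ∂₁ r = a · (∂₁ N × N) and ∂₂ r = b · (∂₂ N × N). If p ∈ ℝ² is a point where ⟪∂₁ N(p) × ∂₂ N(p), N(p)⟫ ≠ 0, then a(p) = −b(p). -/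
open scoped InnerProductSpace

/-!
Write `r_u = a N_u × N` and `r_v = b N_v × N`. Differentiating, the normal components of the
mixed partials are `⟪r_uv, N⟫ = a ⟪N_u × N_v, N⟫` and `⟪r_vu, N⟫ = b ⟪N_v × N_u, N⟫`, because every
other term of the product rule is a cross product with `N`. Since `r_uv = r_vu`, this gives
`(a + b) ⟪N_u × N_v, N⟫ = 0`.
-/

section SecondDerivative

variable {𝕜 E F : Type*} [RCLike 𝕜] [NormedAddCommGroup E] [NormedSpace 𝕜 E]
  [NormedAddCommGroup F] [NormedSpace 𝕜 F] {f : E → F} {p : E}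

theorem ContDiffAt.differentiableAt_fderiv (hf : ContDiffAt 𝕜 2 f p) :
    DifferentiableAt 𝕜 (fderiv 𝕜 f) p :=
  (hf.fderiv_right (m := 1) le_rfl).differentiableAt one_ne_zero

theorem ContDiffAt.differentiableAt_fderiv_apply (hf : ContDiffAt 𝕜 2 f p) (v : E) :
    DifferentiableAt 𝕜 (fun q => fderiv 𝕜 f q v) p :=
  hf.differentiableAt_fderiv.clm_apply (differentiableAt_const v)

theorem ContDiffAt.fderiv_fderiv_apply_comm (hf : ContDiffAt 𝕜 2 f p) (v w : E) :
    fderiv 𝕜 (fun q => fderiv 𝕜 f q v) p w = fderiv 𝕜 (fun q => fderiv 𝕜 f q w) p v := by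
  rw [fderiv_clm_apply hf.differentiableAt_fderiv (differentiableAt_const v),
    fderiv_clm_apply hf.differentiableAt_fderiv (differentiableAt_const w)]
  simpa using hf.isSymmSndFDerivAt (by simp) w v

end SecondDerivative

section CrossProduct

local notation "E3" => EuclideanSpace ℝ (Fin 3)

theorem isBilinearMap_cross3 : IsBilinearMap ℝ cross3 :=
  { add_left := fun x y z => by simp [cross3]
    smul_left := fun c x y => by simp [cross3]
    add_right := fun x y z => by simp [cross3]
    smul_right := fun c x y => by simp [cross3] }

theorem inner_cross3_self_right (x y : E3) : ⟪cross3 x y, y⟫_ℝ = 0 :=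
  dot_cross_self _ _

theorem cross3_anticomm (x y : E3) : cross3 y x = -cross3 x y := by
  rw [cross3, cross3, ← cross_anticomm]
  rfl

theorem inner_fderiv_smul_cross3_self {E : Type*} [NormedAddCommGroup E] [NormedSpace ℝ E]
    {c : E → ℝ} {G N : E → E3} {p : E} (hc : DifferentiableAt ℝ c p)
    (hG : DifferentiableAt ℝ G p) (hN : DifferentiableAt ℝ N p) (w : E) :
    ⟪fderiv ℝ (fun q => c q • cross3 (G q) (N q)) p w, N p⟫_ℝ =
      c p * ⟪cross3 (G p) (fderiv ℝ N p w), N p⟫_ℝ := by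
  have hcross := isBilinearMap_cross3.toContinuousBilinearMap.hasFDerivAt_of_bilinear
    hG.hasFDerivAt hN.hasFDerivAt
  simp only [IsBilinearMap.toContinuousBilinearMap_apply] at hcross
  have hprod : HasFDerivAt (fun q => c q • cross3 (G q) (N q)) _ p :=
    hc.hasFDerivAt.smul hcross
  rw [hprod.fderiv]
  simp [inner_add_left, real_inner_smul_left, inner_cross3_self_right]

end CrossProduct

theorem lelieuvre_coefficients_opposite (r N : ℝ × ℝ → EuclideanSpace ℝ (Fin 3))
    (a b : ℝ × ℝ → ℝ)
    (hr : ContDiff ℝ 2 r) (hN : ContDiff ℝ 2 N)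
    (ha : ContDiff ℝ 1 a) (hb : ContDiff ℝ 1 b)
    (h1 : ∀ p : ℝ × ℝ, fderiv ℝ r p (1, 0) = a p • cross3 (fderiv ℝ N p (1, 0)) (N p))
    (h2 : ∀ p : ℝ × ℝ, fderiv ℝ r p (0, 1) = b p • cross3 (fderiv ℝ N p (0, 1)) (N p))
    (p : ℝ × ℝ)
    (hp : ⟪cross3 (fderiv ℝ N p (1, 0)) (fderiv ℝ N p (0, 1)), N p⟫_ℝ ≠ 0) :
    a p = -b p := by
  have hNp : DifferentiableAt ℝ N p := hN.differentiable (by norm_num) p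
  have hap : DifferentiableAt ℝ a p := ha.differentiable one_ne_zero p
  have hbp : DifferentiableAt ℝ b p := hb.differentiable one_ne_zero p
  have hr1 : (fun q => fderiv ℝ r q (1, 0)) = _ := funext h1
  have hr2 : (fun q => fderiv ℝ r q (0, 1)) = _ := funext h2
  refine mul_right_cancel₀ hp ?_
  calc a p * ⟪cross3 (fderiv ℝ N p (1, 0)) (fderiv ℝ N p (0, 1)), N p⟫_ℝ
      = ⟪fderiv ℝ (fun q => fderiv ℝ r q (1, 0)) p (0, 1), N p⟫_ℝ := by
        rw [hr1, inner_fderiv_smul_cross3_self hap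
          (hN.contDiffAt.differentiableAt_fderiv_apply _) hNp]
    _ = ⟪fderiv ℝ (fun q => fderiv ℝ r q (0, 1)) p (1, 0), N p⟫_ℝ := by
        rw [hr.contDiffAt.fderiv_fderiv_apply_comm]
    _ = b p * ⟪cross3 (fderiv ℝ N p (0, 1)) (fderiv ℝ N p (1, 0)), N p⟫_ℝ := by
        rw [hr2, inner_fderiv_smul_cross3_self hbp
          (hN.contDiffAt.differentiableAt_fderiv_apply _) hNp]
    _ = -b p * ⟪cross3 (fderiv ℝ N p (1, 0)) (fderiv ℝ N p (0, 1)), N p⟫_ℝ := by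
        rw [cross3_anticomm, inner_neg_left, neg_mul, mul_neg]
end

section
/- Let ν : ℤ × ℤ → ℝ³ satisfy the discrete compatibility condition on every elementary quadrilateral: for all (i,j), (ν(i+1,j+1) + ν(i,j)) × (ν(i+1,j) + ν(i,j+1)) = 0. Then there exists a map r : ℤ × ℤ → ℝ³ satisfying the discrete Lelieuvre formulas, i.e. for all (i,j), r(i+1,j) − r(i,j) = ν(i+1,j) × ν(i,j) and r(i,j+1) − r(i,j) = −ν(i,j+1) × ν(i,j). -/
open scoped InnerProductSpace

/-!
The Lelieuvre increments `u i j = ν(i+1,j) × ν(i,j)` and `v i j = -ν(i,j+1) × ν(i,j)` form a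
discrete `1`-form on `ℤ²` whose circulation around the quadrilateral at `(i,j)` equals
`(ν(i+1,j+1) + ν(i,j)) × (ν(i+1,j) + ν(i,j+1))`, by bilinearity and antisymmetry of `×`.
The compatibility condition therefore says the form is closed, and on `ℤ²` every closed form is
exact: integrate `u` along the axis `j = 0` and then `v` along each vertical line.
-/

open Finset

section DiscreteIntegration

variable {E : Type*} [AddCommGroup E]

theorem Int.exists_sub_eq (g : ℤ → E) : ∃ f : ℤ → E, ∀ n, f (n + 1) - f n = g n := by
  refine ⟨fun n => ∑ k ∈ Ico 0 n, g k - ∑ k ∈ Ico n 0, g k, fun n => ?_⟩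
  dsimp only
  rcases le_or_gt 0 n with hn | hn
  · simp only [Ico_eq_empty_of_le hn, Ico_eq_empty_of_le (by omega : 0 ≤ n + 1),
      ← sum_Ico_add_eq_sum_Ico_add_one hn, sum_empty]
    abel
  · rw [Ico_eq_empty_of_le hn.le, Ico_eq_empty_of_le (by omega : n + 1 ≤ 0),
      ← insert_Ico_add_one_left_eq_Ico hn, sum_insert (by simp)]
    abel

theorem Int.exists_sub_eq_of_map_zero (g : ℤ → E) :
    ∃ f : ℤ → E, f 0 = 0 ∧ ∀ n, f (n + 1) - f n = g n := by
  obtain ⟨f, hf⟩ := Int.exists_sub_eq g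
  exact ⟨fun n => f n - f 0, sub_self _, fun n => by simpa using hf n⟩

theorem Int.eq_map_zero_of_map_add_one {α : Type*} {f : ℤ → α} (hf : ∀ n, f (n + 1) = f n)
    (n : ℤ) : f n = f 0 := by
  simpa using (show Function.Periodic f 1 from hf).int_mul_eq n

theorem exists_sub_eq_of_closed {u v : ℤ → ℤ → E}
    (hclosed : ∀ i j, u i (j + 1) - u i j = v (i + 1) j - v i j) :
    ∃ r : ℤ × ℤ → E, ∀ i j, r (i + 1, j) - r (i, j) = u i j ∧ r (i, j + 1) - r (i, j) = v i j := by
  obtain ⟨a, ha⟩ := Int.exists_sub_eq (fun i => u i 0)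
  choose b hb₀ hb using fun i => Int.exists_sub_eq_of_map_zero (v i)
  have hb_sub (i j : ℤ) : b (i + 1) j - b i j = u i j - u i 0 := by
    have hstep (j : ℤ) :
        b (i + 1) (j + 1) - b i (j + 1) - u i (j + 1) = b (i + 1) j - b i j - u i j := by
      rw [eq_add_of_sub_eq (hb (i + 1) j), eq_add_of_sub_eq (hb i j),
        eq_add_of_sub_eq (hclosed i j)]
      abel
    have hconst := Int.eq_map_zero_of_map_add_one (f := fun j => b (i + 1) j - b i j - u i j)
      hstep j
    simp only [hb₀, sub_self, zero_sub] at hconst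
    rw [sub_eq_iff_eq_add.mp hconst]
    abel
  refine ⟨fun p => a p.1 + b p.1 p.2, fun i j => ⟨?_, ?_⟩⟩
  · calc a (i + 1) + b (i + 1) j - (a i + b i j)
        = (a (i + 1) - a i) + (b (i + 1) j - b i j) := by abel
      _ = u i j := by rw [ha, hb_sub]; abel
  · simpa using hb i j

end DiscreteIntegration

theorem cross3_lelieuvre_circulation (ν₀ ν₁ ν₂ ν₁₂ : EuclideanSpace ℝ (Fin 3)) :
    (cross3 ν₁₂ ν₂ - cross3 ν₁ ν₀) - (-cross3 ν₁₂ ν₁ - -cross3 ν₂ ν₀) =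
      cross3 (ν₁₂ + ν₀) (ν₁ + ν₂) := by
  ext k
  fin_cases k <;> simp [cross3, crossProduct] <;> ring

theorem discrete_immersion_exists (ν : ℤ × ℤ → EuclideanSpace ℝ (Fin 3))
    (hcompat : ∀ i j : ℤ,
      cross3 (ν (i + 1, j + 1) + ν (i, j)) (ν (i + 1, j) + ν (i, j + 1)) = 0) :
    ∃ r : ℤ × ℤ → EuclideanSpace ℝ (Fin 3), ∀ i j : ℤ,
      r (i + 1, j) - r (i, j) = cross3 (ν (i + 1, j)) (ν (i, j)) ∧
      r (i, j + 1) - r (i, j) = -cross3 (ν (i, j + 1)) (ν (i, j)) := by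
  refine exists_sub_eq_of_closed (u := fun i j => cross3 (ν (i + 1, j)) (ν (i, j)))
    (v := fun i j => -cross3 (ν (i, j + 1)) (ν (i, j))) fun i j => ?_
  rw [← sub_eq_zero, ← hcompat i j, ← cross3_lelieuvre_circulation]
end

section
/- Let ν₀, w ∈ ℝ³ with w ≠ 0 and ⟪w, ν₀⟫ ≠ 0, and let ρ₁₂ ∈ ℝ. Set α := ‖w‖² (ρ₁₂ − ‖ν₀‖²) / ⟪w, ν₀⟫². Then a vector ν₁₂ ∈ ℝ³ satisfies both (ν₁₂ + ν₀) × w = 0 and ‖ν₁₂‖² = ρ₁₂ if and only if 1 + α ≥ 0 and ν₁₂ = ((1 + √(1 + α)) ⟪w, ν₀⟫ / ‖w‖²) · w − ν₀ or ν₁₂ = ((1 − √(1 + α)) ⟪w, ν₀⟫ / ‖w‖²) · w − ν₀. -/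
/-! Compatibility forces `ν₁₂ + ν₀` to be parallel to `w`, so `ν₁₂ = C w - ν₀` for some `C : ℝ`,
and the norm condition becomes the real quadratic `‖w‖² C² - 2⟪w, ν₀⟫ C + ‖ν₀‖² - ρ₁₂ = 0`,
whose discriminant is `(2⟪w, ν₀⟫)² (1 + α)`. -/

open scoped InnerProductSpace

theorem cross3_eq_zero_iff {u w : EuclideanSpace ℝ (Fin 3)} (hw : w ≠ 0) :
    cross3 u w = 0 ↔ ∃ c : ℝ, c • w = u := by
  have hw' : WithLp.equiv 2 (Fin 3 → ℝ) w ≠ 0 := by simpa using hw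
  rw [← not_iff_not, not_exists, cross3, WithLp.equiv_symm_apply, WithLp.toLp_eq_zero,
    ← ne_eq, ← cross_anticomm, neg_ne_zero, crossProduct_ne_zero_iff_linearIndependent,
    LinearIndependent.pair_iff' hw']
  exact forall_congr' fun c ↦ (WithLp.ofLp_injective 2).ne_iff

theorem norm_smul_sub_sq {E : Type*} [NormedAddCommGroup E] [InnerProductSpace ℝ E]
    (c : ℝ) (w v : E) :
    ‖c • w - v‖ ^ 2 = ‖w‖ ^ 2 * (c * c) + (-2 * ⟪w, v⟫_ℝ) * c + ‖v‖ ^ 2 := by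
  rw [norm_sub_sq_real, norm_smul, real_inner_smul_left, mul_pow, Real.norm_eq_abs, sq_abs]
  ring

theorem quadratic_eq_zero_iff_of_discrim_eq_sq_mul {a b c r δ : ℝ} (ha : a ≠ 0) (hr : r ≠ 0)
    (h : discrim a b c = r ^ 2 * δ) (x : ℝ) :
    a * (x * x) + b * x + c = 0 ↔
      0 ≤ δ ∧ (x = (-b + r * √δ) / (2 * a) ∨ x = (-b - r * √δ) / (2 * a)) := by
  have hroots (hδ : 0 ≤ δ) := quadratic_eq_zero_iff ha (s := r * √δ)
    (by rw [h, mul_mul_mul_comm, Real.mul_self_sqrt hδ, sq]) x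
  refine ⟨fun hx ↦ ?_, fun ⟨hδ, hx⟩ ↦ (hroots hδ).2 hx⟩
  have hδ : 0 ≤ δ := by
    have hsq := discrim_eq_sq_of_quadratic_eq_zero hx
    rw [h] at hsq
    exact nonneg_of_mul_nonneg_right (hsq ▸ sq_nonneg _) (by positivity)
  exact ⟨hδ, (hroots hδ).1 hx⟩

theorem cross3_add_eq_zero_and_norm_sq_eq_iff {ν ν₀ w : EuclideanSpace ℝ (Fin 3)} (hw : w ≠ 0)
    (ρ : ℝ) :
    (cross3 (ν + ν₀) w = 0 ∧ ‖ν‖ ^ 2 = ρ) ↔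
      ∃ c : ℝ, ν = c • w - ν₀ ∧
        ‖w‖ ^ 2 * (c * c) + (-2 * ⟪w, ν₀⟫_ℝ) * c + (‖ν₀‖ ^ 2 - ρ) = 0 := by
  rw [cross3_eq_zero_iff hw]
  constructor
  · rintro ⟨⟨c, hc⟩, hρ⟩
    obtain rfl : ν = c • w - ν₀ := eq_sub_of_add_eq hc.symm
    exact ⟨c, rfl, by rw [← hρ, norm_smul_sub_sq]; ring⟩
  · rintro ⟨c, rfl, hc⟩
    exact ⟨⟨c, (sub_add_cancel _ _).symm⟩, by rw [norm_smul_sub_sq]; linarith⟩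

theorem compatibility_and_norm_iff (ν₀ w : EuclideanSpace ℝ (Fin 3))
    (hw : w ≠ 0) (hinner : ⟪w, ν₀⟫_ℝ ≠ 0) (ρ₁₂ : ℝ)
    (α : ℝ) (hα : α = ‖w‖ ^ 2 * (ρ₁₂ - ‖ν₀‖ ^ 2) / ⟪w, ν₀⟫_ℝ ^ 2) :
    ∀ ν₁₂ : EuclideanSpace ℝ (Fin 3),
      (cross3 (ν₁₂ + ν₀) w = 0 ∧ ‖ν₁₂‖ ^ 2 = ρ₁₂) ↔
        (1 + α ≥ 0 ∧
          (ν₁₂ = ((1 + Real.sqrt (1 + α)) * ⟪w, ν₀⟫_ℝ / ‖w‖ ^ 2) • w - ν₀ ∨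
           ν₁₂ = ((1 - Real.sqrt (1 + α)) * ⟪w, ν₀⟫_ℝ / ‖w‖ ^ 2) • w - ν₀)) := by
  intro ν₁₂
  have hW : ‖w‖ ^ 2 ≠ 0 := by positivity
  have hdiscrim : discrim (‖w‖ ^ 2) (-2 * ⟪w, ν₀⟫_ℝ) (‖ν₀‖ ^ 2 - ρ₁₂) =
      (2 * ⟪w, ν₀⟫_ℝ) ^ 2 * (1 + α) := by
    rw [discrim, hα]
    field_simp
    ring
  have hroots (σ : ℝ) :
      (-(-2 * ⟪w, ν₀⟫_ℝ) + 2 * ⟪w, ν₀⟫_ℝ * σ) / (2 * ‖w‖ ^ 2) =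
          (1 + σ) * ⟪w, ν₀⟫_ℝ / ‖w‖ ^ 2 ∧
        (-(-2 * ⟪w, ν₀⟫_ℝ) - 2 * ⟪w, ν₀⟫_ℝ * σ) / (2 * ‖w‖ ^ 2) =
          (1 - σ) * ⟪w, ν₀⟫_ℝ / ‖w‖ ^ 2 := by
    constructor <;> field_simp
  rw [cross3_add_eq_zero_and_norm_sq_eq_iff hw]
  simp only [quadratic_eq_zero_iff_of_discrim_eq_sq_mul hW (mul_ne_zero two_ne_zero hinner)
    hdiscrim, (hroots _).1, (hroots _).2]
  constructor
  · rintro ⟨c, rfl, hδ, rfl | rfl⟩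
    exacts [⟨hδ, .inl rfl⟩, ⟨hδ, .inr rfl⟩]
  · rintro ⟨hδ, rfl | rfl⟩
    exacts [⟨_, rfl, hδ, .inl rfl⟩, ⟨_, rfl, hδ, .inr rfl⟩]
end
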